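/- The function λ₀ : ℝ⁴ → ℝ defined by λ₀(ξ) = π^{−2} ∫_{ℝ⁴} χ_V(ξ+x) Q(ξ+x) e^{−‖x‖²} dx is unbounded above (sup_{ξ∈ℝ⁴} λ₀(ξ) = +∞) and has infimum 0 (inf_{ξ∈ℝ⁴} λ₀(ξ) = 0, the infimum not being attained). In particular, the essential range of λ₀ is contained in (0,+∞) and the multiplication operator by λ₀ on L²(ℝ⁴) is an unbounded positive operator. -/

import Mathlib

open MeasureTheory

/-- The future light cone `V = {p : p₀ ≥ √(p₁² + p₂² + p₃²)}` in `ℝ⁴`. -/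
def futureCone : Set (EuclideanSpace ℝ (Fin 4)) :=
  {p | Real.sqrt (p 1 ^ 2 + p 2 ^ 2 + p 3 ^ 2) ≤ p 0}

/-- The Minkowski quadratic form `Q(p) = p₀² − p₁² − p₂² − p₃²`. -/
def minkQ (p : EuclideanSpace ℝ (Fin 4)) : ℝ :=
  p 0 ^ 2 - p 1 ^ 2 - p 2 ^ 2 - p 3 ^ 2

/-- `λ₀(ξ) = π⁻² ∫ χ_V(ξ+x) Q(ξ+x) e^{−‖x‖²} dx`. -/
noncomputable def lambda0 (ξ : EuclideanSpace ℝ (Fin 4)) : ℝ :=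
  (Real.pi ^ 2)⁻¹ *
    ∫ x, futureCone.indicator (fun _ => (1 : ℝ)) (ξ + x) * minkQ (ξ + x) * Real.exp (-‖x‖ ^ 2)

open Real

local notation "E4" => EuclideanSpace ℝ (Fin 4)

lemma normsq4 (x : E4) : ‖x‖ ^ 2 = x 0 ^ 2 + x 1 ^ 2 + x 2 ^ 2 + x 3 ^ 2 := by
  rw [EuclideanSpace.norm_eq, Real.sq_sqrt (by positivity)]
  simp [Fin.sum_univ_four, sq_abs]

lemma coord_le_norm (x : E4) (i : Fin 4) : |x i| ≤ ‖x‖ := by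
  have h : x i ^ 2 ≤ ‖x‖ ^ 2 := by
    rw [normsq4]; fin_cases i <;> simp <;> nlinarith [sq_nonneg (x 0), sq_nonneg (x 1), sq_nonneg (x 2), sq_nonneg (x 3)]
  nlinarith [sq_abs (x i), abs_nonneg (x i), norm_nonneg x]

lemma integrable_gauss4 {b : ℝ} (hb : 0 < b) :
    Integrable (fun x : E4 => Real.exp (-b * ‖x‖ ^ 2)) := by
  have h := GaussianFourier.integrable_cexp_neg_mul_sq_norm_add (V := E4)
    (b := (b : ℂ)) (by simpa using hb) 0 0
  have h2 := h.norm
  refine h2.congr (Filter.Eventually.of_forall fun x => ?_)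
  simp [Complex.norm_exp, ← Complex.ofReal_pow]

noncomputable def Fint (ξ x : E4) : ℝ :=
  futureCone.indicator (fun _ => (1 : ℝ)) (ξ + x) * minkQ (ξ + x) * Real.exp (-‖x‖ ^ 2)

lemma mem_cone_iff (p : E4) : p ∈ futureCone ↔ Real.sqrt (p 1 ^ 2 + p 2 ^ 2 + p 3 ^ 2) ≤ p 0 :=
  Iff.rfl

lemma minkQ_nonneg_of_mem {p : E4} (hp : p ∈ futureCone) : 0 ≤ minkQ p := by
  rw [mem_cone_iff] at hp
  have h0 : 0 ≤ p 0 := le_trans (Real.sqrt_nonneg _) hp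
  have hs : p 1 ^ 2 + p 2 ^ 2 + p 3 ^ 2 ≤ p 0 ^ 2 := by
    have := Real.sq_sqrt (show (0:ℝ) ≤ p 1 ^ 2 + p 2 ^ 2 + p 3 ^ 2 by positivity)
    nlinarith [Real.sqrt_nonneg (p 1 ^ 2 + p 2 ^ 2 + p 3 ^ 2)]
  simp only [minkQ]; linarith

lemma Fint_nonneg (ξ x : E4) : 0 ≤ Fint ξ x := by
  unfold Fint
  by_cases h : ξ + x ∈ futureCone
  · rw [Set.indicator_of_mem h]
    have := minkQ_nonneg_of_mem h
    positivity
  · rw [Set.indicator_of_notMem h]; simp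

lemma Fint_le (ξ x : E4) : Fint ξ x ≤ ‖ξ + x‖ ^ 2 * Real.exp (-‖x‖ ^ 2) := by
  unfold Fint
  have hQ : minkQ (ξ + x) ≤ ‖ξ + x‖ ^ 2 := by
    rw [normsq4]; unfold minkQ
    nlinarith [sq_nonneg ((ξ+x) 1), sq_nonneg ((ξ+x) 2), sq_nonneg ((ξ+x) 3)]
  by_cases h : ξ + x ∈ futureCone
  · rw [Set.indicator_of_mem h, one_mul]
    exact mul_le_mul_of_nonneg_right hQ (Real.exp_pos _).le
  · rw [Set.indicator_of_notMem h]
    simp only [zero_mul]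
    positivity

lemma sq_mul_exp_le (u : ℝ) (hu : 0 ≤ u) : u * Real.exp (-u) ≤ Real.exp (-(u / 2)) := by
  have h1 : u ≤ Real.exp (u / 2) := by
    have h2 := Real.add_one_le_exp (u / 4)
    have h3 : Real.exp (u / 2) = Real.exp (u / 4) * Real.exp (u / 4) := by
      rw [← Real.exp_add]; ring_nf
    have h4 : (u / 4 + 1) * (u / 4 + 1) ≤ Real.exp (u / 4) * Real.exp (u / 4) :=
      mul_le_mul h2 h2 (by linarith) (Real.exp_pos _).le
    nlinarith [sq_nonneg (u / 4 - 1)]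
  calc u * Real.exp (-u) ≤ Real.exp (u / 2) * Real.exp (-u) :=
        mul_le_mul_of_nonneg_right h1 (Real.exp_pos _).le
    _ = Real.exp (-(u / 2)) := by rw [← Real.exp_add]; ring_nf

lemma cone_measurable : MeasurableSet futureCone := by
  have h1 : Continuous fun p : E4 => Real.sqrt (p 1 ^ 2 + p 2 ^ 2 + p 3 ^ 2) := by
    fun_prop
  have h2 : Continuous fun p : E4 => p 0 := by fun_prop
  exact (isClosed_le h1 h2).measurableSet

lemma Fint_aemeasurable (ξ : E4) : AEStronglyMeasurable (Fint ξ) volume := by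
  have h1 : Measurable fun x : E4 => futureCone.indicator (fun _ => (1:ℝ)) (ξ + x) :=
    (measurable_const.indicator cone_measurable).comp (measurable_id.const_add ξ)
  have h2 : Continuous fun x : E4 => minkQ (ξ + x) := by
    unfold minkQ; fun_prop
  have h3 : Continuous fun x : E4 => Real.exp (-‖x‖ ^ 2) := by fun_prop
  exact ((h1.mul h2.measurable).mul h3.measurable).aestronglyMeasurable

lemma Fint_integrable (ξ : E4) : Integrable (Fint ξ) := by
  have hg : Integrable (fun x : E4 =>
      2 * ‖ξ‖ ^ 2 * Real.exp (-1 * ‖x‖ ^ 2) + 2 * Real.exp (-(1/2 : ℝ) * ‖x‖ ^ 2)) :=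
    ((integrable_gauss4 one_pos).const_mul _).add
      ((integrable_gauss4 (by norm_num : (0:ℝ) < 1/2)).const_mul _)
  refine hg.mono' (Fint_aemeasurable ξ) (Filter.Eventually.of_forall fun x => ?_)
  rw [Real.norm_of_nonneg (Fint_nonneg ξ x)]
  have h1 := Fint_le ξ x
  have h2 : ‖ξ + x‖ ^ 2 ≤ 2 * ‖ξ‖ ^ 2 + 2 * ‖x‖ ^ 2 := by
    have := norm_add_le ξ x
    nlinarith [norm_nonneg ξ, norm_nonneg x, norm_nonneg (ξ + x), sq_nonneg (‖ξ‖ - ‖x‖), sq_nonneg (‖ξ‖ + ‖x‖)]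
  have h3 : ‖x‖ ^ 2 * Real.exp (-‖x‖ ^ 2) ≤ Real.exp (-(‖x‖ ^ 2 / 2)) :=
    sq_mul_exp_le _ (by positivity)
  have h4 : ‖ξ + x‖ ^ 2 * Real.exp (-‖x‖ ^ 2) ≤
      (2 * ‖ξ‖ ^ 2 + 2 * ‖x‖ ^ 2) * Real.exp (-‖x‖ ^ 2) :=
    mul_le_mul_of_nonneg_right h2 (Real.exp_pos _).le
  have h5 : Real.exp (-1 * ‖x‖ ^ 2) = Real.exp (-‖x‖ ^ 2) := by ring_nf
  have h6 : Real.exp (-(1/2 : ℝ) * ‖x‖ ^ 2) = Real.exp (-(‖x‖ ^ 2 / 2)) := by ring_nf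
  rw [h5, h6]
  nlinarith [Real.exp_pos (-‖x‖ ^ 2), sq_nonneg ‖x‖]

lemma Fint_integral_pos (ξ : E4) : 0 < ∫ x, Fint ξ x := by
  rw [integral_pos_iff_support_of_nonneg (Fint_nonneg ξ) (Fint_integrable ξ)]
  set U := (fun x : E4 => ξ + x) ⁻¹'
    {p : E4 | Real.sqrt (p 1 ^ 2 + p 2 ^ 2 + p 3 ^ 2) < p 0} with hU
  have hUopen : IsOpen U := by
    apply IsOpen.preimage (by fun_prop)
    exact isOpen_lt (by fun_prop) (by fun_prop)
  have hUne : U.Nonempty := by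
    refine ⟨EuclideanSpace.single 0 1 - ξ, ?_⟩
    simp only [hU, Set.mem_preimage, Set.mem_setOf_eq, add_sub_cancel]
    simp [EuclideanSpace.single_apply]
  have hsub : U ⊆ Function.support (Fint ξ) := by
    intro x hx
    simp only [hU, Set.mem_preimage, Set.mem_setOf_eq] at hx
    have hmem : ξ + x ∈ futureCone := le_of_lt hx
    have hQ : 0 < minkQ (ξ + x) := by
      have hs0 : (0:ℝ) ≤ (ξ+x) 1 ^ 2 + (ξ+x) 2 ^ 2 + (ξ+x) 3 ^ 2 := by positivity
      have := Real.sq_sqrt hs0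
      unfold minkQ
      nlinarith [Real.sqrt_nonneg ((ξ+x) 1 ^ 2 + (ξ+x) 2 ^ 2 + (ξ+x) 3 ^ 2)]
    have : Fint ξ x = minkQ (ξ + x) * Real.exp (-‖x‖ ^ 2) := by
      unfold Fint; rw [Set.indicator_of_mem hmem, one_mul]
    rw [Function.mem_support, this]
    positivity
  exact lt_of_lt_of_le (hUopen.measure_pos volume hUne) (measure_mono hsub)

lemma sqrt4eq : Real.sqrt 4 = 2 := by
  rw [show (4:ℝ) = 2 ^ 2 by norm_num, Real.sqrt_sq (by norm_num : (0:ℝ) ≤ 2)]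

lemma Fint_lower {t : ℝ} (ht : 3 ≤ t) {x : E4} (hx : x ∈ Metric.ball (0:E4) 1) :
    ((t - 1) ^ 2 - 3) * Real.exp (-1) ≤ Fint (EuclideanSpace.single 0 t) x := by
  rw [mem_ball_zero_iff] at hx
  have hc : ∀ i, |x i| ≤ 1 := fun i => le_of_lt (lt_of_le_of_lt (coord_le_norm x i) hx)
  set p := EuclideanSpace.single 0 t + x with hp
  have h0 : p 0 = t + x 0 := by simp [hp, EuclideanSpace.single_apply]
  have h1 : p 1 = x 1 := by simp [hp, EuclideanSpace.single_apply]
  have h2 : p 2 = x 2 := by simp [hp, EuclideanSpace.single_apply]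
  have h3 : p 3 = x 3 := by simp [hp, EuclideanSpace.single_apply]
  have hx0 := abs_le.1 (hc 0)
  have hx1 := abs_le.1 (hc 1)
  have hx2 := abs_le.1 (hc 2)
  have hx3 := abs_le.1 (hc 3)
  have hmem : p ∈ futureCone := by
    rw [mem_cone_iff, h0, h1, h2, h3]
    have hs : x 1 ^ 2 + x 2 ^ 2 + x 3 ^ 2 ≤ 4 := by nlinarith
    calc Real.sqrt (x 1 ^ 2 + x 2 ^ 2 + x 3 ^ 2) ≤ Real.sqrt 4 := Real.sqrt_le_sqrt hs
      _ = 2 := sqrt4eq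
      _ ≤ t + x 0 := by linarith
  have hQ : ((t - 1) ^ 2 - 3) ≤ minkQ p := by
    unfold minkQ; rw [h0, h1, h2, h3]; nlinarith
  have hA : (0:ℝ) ≤ (t - 1) ^ 2 - 3 := by nlinarith
  have hexp : Real.exp (-1) ≤ Real.exp (-‖x‖ ^ 2) := by
    apply Real.exp_le_exp.2
    nlinarith [norm_nonneg x]
  have : Fint (EuclideanSpace.single 0 t) x = minkQ p * Real.exp (-‖x‖ ^ 2) := by
    unfold Fint; rw [← hp, Set.indicator_of_mem hmem, one_mul]
  rw [this]
  exact mul_le_mul hQ hexp (Real.exp_pos _).le (le_trans hA hQ)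

lemma Fint_upper {t : ℝ} (ht : 0 ≤ t) (x : E4) :
    Fint (EuclideanSpace.single 0 (-t)) x ≤
      Real.exp (-(t ^ 2 / 4)) * Real.exp (-(1/4 : ℝ) * ‖x‖ ^ 2) := by
  set p := EuclideanSpace.single 0 (-t) + x with hp
  by_cases hmem : p ∈ futureCone
  · have h0 : p 0 = -t + x 0 := by simp [hp, EuclideanSpace.single_apply]
    have h1 : p 1 = x 1 := by simp [hp, EuclideanSpace.single_apply]
    have h2 : p 2 = x 2 := by simp [hp, EuclideanSpace.single_apply]
    have h3 : p 3 = x 3 := by simp [hp, EuclideanSpace.single_apply]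
    have hp0 : 0 ≤ p 0 := le_trans (Real.sqrt_nonneg _) hmem
    have hx0 : t ≤ x 0 := by rw [h0] at hp0; linarith
    have htn : t ≤ ‖x‖ := le_trans (le_trans hx0 (le_abs_self _)) (coord_le_norm x 0)
    have hQ : minkQ p ≤ ‖x‖ ^ 2 := by
      unfold minkQ
      rw [h0, h1, h2, h3]
      have : (-t + x 0) ^ 2 ≤ x 0 ^ 2 := by nlinarith
      have hc0 : x 0 ^ 2 ≤ ‖x‖ ^ 2 := by
        have := coord_le_norm x 0
        nlinarith [abs_nonneg (x 0), sq_abs (x 0)]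
      nlinarith [sq_nonneg (x 1), sq_nonneg (x 2), sq_nonneg (x 3)]
    have hF : Fint (EuclideanSpace.single 0 (-t)) x = minkQ p * Real.exp (-‖x‖ ^ 2) := by
      unfold Fint; rw [← hp, Set.indicator_of_mem hmem, one_mul]
    have step1 : Fint (EuclideanSpace.single 0 (-t)) x ≤ ‖x‖ ^ 2 * Real.exp (-‖x‖ ^ 2) := by
      rw [hF]; exact mul_le_mul_of_nonneg_right hQ (Real.exp_pos _).le
    have step2 : ‖x‖ ^ 2 * Real.exp (-‖x‖ ^ 2) ≤ Real.exp (-(‖x‖ ^ 2 / 2)) :=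
      sq_mul_exp_le _ (by positivity)
    have step3 : Real.exp (-(‖x‖ ^ 2 / 2)) =
        Real.exp (-(‖x‖ ^ 2 / 4)) * Real.exp (-(1/4 : ℝ) * ‖x‖ ^ 2) := by
      rw [← Real.exp_add]; ring_nf
    have step4 : Real.exp (-(‖x‖ ^ 2 / 4)) ≤ Real.exp (-(t ^ 2 / 4)) := by
      apply Real.exp_le_exp.2
      nlinarith [norm_nonneg x]
    calc Fint (EuclideanSpace.single 0 (-t)) x ≤ Real.exp (-(‖x‖ ^ 2 / 2)) :=
          le_trans step1 step2
      _ = Real.exp (-(‖x‖ ^ 2 / 4)) * Real.exp (-(1/4 : ℝ) * ‖x‖ ^ 2) := step3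
      _ ≤ Real.exp (-(t ^ 2 / 4)) * Real.exp (-(1/4 : ℝ) * ‖x‖ ^ 2) :=
          mul_le_mul_of_nonneg_right step4 (Real.exp_pos _).le
  · have : Fint (EuclideanSpace.single 0 (-t)) x = 0 := by
      unfold Fint; rw [← hp, Set.indicator_of_notMem hmem]; ring
    rw [this]; positivity

lemma lambda0_eq (ξ : E4) : lambda0 ξ = (Real.pi ^ 2)⁻¹ * ∫ x, Fint ξ x := rfl

lemma lambda0_pos (ξ : E4) : 0 < lambda0 ξ := by
  rw [lambda0_eq]
  exact mul_pos (by positivity) (Fint_integral_pos ξ)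

lemma lambda0_lower {t : ℝ} (ht : 3 ≤ t) :
    (Real.pi ^ 2)⁻¹ * (((t - 1) ^ 2 - 3) * Real.exp (-1) *
      (volume (Metric.ball (0:E4) 1)).toReal) ≤ lambda0 (EuclideanSpace.single 0 t) := by
  rw [lambda0_eq]
  apply mul_le_mul_of_nonneg_left _ (by positivity)
  calc ((t - 1) ^ 2 - 3) * Real.exp (-1) * (volume (Metric.ball (0:E4) 1)).toReal
      ≤ ∫ x in Metric.ball (0:E4) 1, Fint (EuclideanSpace.single 0 t) x :=
        setIntegral_ge_of_const_le_real measurableSet_ball measure_ball_lt_top.ne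
          (fun x hx => Fint_lower ht hx) ((Fint_integrable _).integrableOn)
    _ ≤ ∫ x, Fint (EuclideanSpace.single 0 t) x :=
        setIntegral_le_integral (Fint_integrable _)
          (Filter.Eventually.of_forall (Fint_nonneg _))

lemma lambda0_upper {t : ℝ} (ht : 0 ≤ t) :
    lambda0 (EuclideanSpace.single 0 (-t)) ≤
      ((Real.pi ^ 2)⁻¹ * ∫ x : E4, Real.exp (-(1/4 : ℝ) * ‖x‖ ^ 2)) *
        Real.exp (-(t ^ 2 / 4)) := by
  rw [lambda0_eq]
  have h1 : (∫ x, Fint (EuclideanSpace.single 0 (-t)) x) ≤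
      ∫ x : E4, Real.exp (-(t ^ 2 / 4)) * Real.exp (-(1/4 : ℝ) * ‖x‖ ^ 2) :=
    integral_mono (Fint_integrable _)
      ((integrable_gauss4 (by norm_num)).const_mul _) (Fint_upper ht)
  rw [MeasureTheory.integral_const_mul] at h1
  calc (Real.pi ^ 2)⁻¹ * ∫ x, Fint (EuclideanSpace.single 0 (-t)) x
      ≤ (Real.pi ^ 2)⁻¹ * (Real.exp (-(t ^ 2 / 4)) * ∫ x : E4, Real.exp (-(1/4 : ℝ) * ‖x‖ ^ 2)) :=
        mul_le_mul_of_nonneg_left h1 (by positivity)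
    _ = ((Real.pi ^ 2)⁻¹ * ∫ x : E4, Real.exp (-(1/4 : ℝ) * ‖x‖ ^ 2)) *
        Real.exp (-(t ^ 2 / 4)) := by ring

/-- `λ₀` is unbounded above, has infimum `0`, and the infimum is not attained. -/
theorem lambda0_unbounded_inf_zero :
    (¬ BddAbove (Set.range lambda0)) ∧ (⨅ ξ, lambda0 ξ) = 0 ∧ ∀ ξ, 0 < lambda0 ξ := by
  have hpos := lambda0_pos
  refine ⟨?_, ?_, hpos⟩
  · rintro ⟨M, hM⟩
    set v := (volume (Metric.ball (0:E4) 1)).toReal with hv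
    have hvpos : 0 < v := by
      rw [hv, ENNReal.toReal_pos_iff]
      exact ⟨Metric.measure_ball_pos volume 0 one_pos, measure_ball_lt_top⟩
    set c := (Real.pi ^ 2)⁻¹ * Real.exp (-1) * v with hc
    have hcpos : 0 < c := by
      rw [hc]; positivity
    set m := max (M / c + 3) 4 with hm
    set t := 1 + Real.sqrt (m + 1) with htdef
    have hm4 : (4:ℝ) ≤ m := le_max_right _ _
    have hsq : Real.sqrt (m + 1) ^ 2 = m + 1 :=
      Real.sq_sqrt (by linarith)
    have hs2 : (2:ℝ) ≤ Real.sqrt (m + 1) := by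
      calc (2:ℝ) = Real.sqrt 4 := sqrt4eq.symm
        _ ≤ Real.sqrt (m + 1) := Real.sqrt_le_sqrt (by linarith)
    have ht3 : (3:ℝ) ≤ t := by rw [htdef]; linarith
    have hkey := lambda0_lower ht3
    have hub : lambda0 (EuclideanSpace.single 0 t) ≤ M := hM ⟨_, rfl⟩
    have ht1 : (t - 1) ^ 2 = m + 1 := by rw [htdef]; ring_nf; ring_nf at hsq; linarith
    rw [ht1] at hkey
    have hrw : (Real.pi ^ 2)⁻¹ * ((m + 1 - 3) * Real.exp (-1) * v) = c * (m - 2) := by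
      rw [hc]; ring
    rw [hrw] at hkey
    have hmM : M / c + 3 ≤ m := le_max_left _ _
    have hMc : c * (M / c) = M := by
      field_simp
    nlinarith [mul_le_mul_of_nonneg_left (by linarith : M / c + 1 ≤ m - 2) hcpos.le]
  · have hbdd : BddBelow (Set.range lambda0) := by
      refine ⟨0, ?_⟩
      rintro y ⟨ξ, rfl⟩
      exact (hpos ξ).le
    refine le_antisymm ?_ (le_ciInf fun ξ => (hpos ξ).le)
    by_contra h
    push_neg at h
    set ε := ⨅ ξ, lambda0 ξ with hε
    set C := (Real.pi ^ 2)⁻¹ * ∫ x : E4, Real.exp (-(1/4 : ℝ) * ‖x‖ ^ 2) with hC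
    have hC0 : 0 ≤ C := by
      rw [hC]
      apply mul_nonneg (by positivity)
      exact integral_nonneg fun x => (Real.exp_pos _).le
    set t := Real.sqrt (4 * (C + 1) / ε) + 1 with htdef
    have ht0 : 0 ≤ t := by
      rw [htdef]; positivity
    have htpos : 0 < t := by rw [htdef]; positivity
    have ht2 : 4 * (C + 1) / ε ≤ t ^ 2 := by
      have hs := Real.sq_sqrt (show (0:ℝ) ≤ 4 * (C + 1) / ε by positivity)
      rw [htdef]
      nlinarith [Real.sqrt_nonneg (4 * (C + 1) / ε)]
    have h1 : ε ≤ C * Real.exp (-(t ^ 2 / 4)) :=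
      le_trans (ciInf_le hbdd _) (lambda0_upper ht0)
    have hexple : Real.exp (-(t ^ 2 / 4)) ≤ 4 / t ^ 2 := by
      rw [Real.exp_neg]
      have h2 : t ^ 2 / 4 ≤ Real.exp (t ^ 2 / 4) := by
        nlinarith [Real.add_one_le_exp (t ^ 2 / 4)]
      have h3 : (Real.exp (t ^ 2 / 4))⁻¹ ≤ (t ^ 2 / 4)⁻¹ := by
        apply inv_anti₀ (by positivity) h2
      calc (Real.exp (t ^ 2 / 4))⁻¹ ≤ (t ^ 2 / 4)⁻¹ := h3
        _ = 4 / t ^ 2 := by rw [inv_div]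
    have h4 : ε ≤ C * (4 / t ^ 2) :=
      le_trans h1 (mul_le_mul_of_nonneg_left hexple hC0)
    have ht2pos : 0 < t ^ 2 := by positivity
    have h5 : ε * t ^ 2 ≤ 4 * C := by
      have := mul_le_mul_of_nonneg_right h4 ht2pos.le
      calc ε * t ^ 2 ≤ C * (4 / t ^ 2) * t ^ 2 := this
        _ = 4 * C := by field_simp
    have h6 : 4 * (C + 1) ≤ ε * t ^ 2 := by
      have := mul_le_mul_of_nonneg_left ht2 h.le
      calc 4 * (C + 1) = ε * (4 * (C + 1) / ε) := by field_simp
        _ ≤ ε * t ^ 2 := this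
    linarith
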